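/- Let φ(x) = (2π)^{−1/2} exp(−x²/2) be the standard Gaussian density. Consider two pricing environments with expected demand functions d₁(a) = 2 − a and d₂(a) = (4 − a)/5 and expected revenues r_i(a) = a · d_i(a). Given an arbitrary sequence of observations O₁, O₂, … ∈ ℝ, define recursively: p₁ = 1/2, a_t = p_t · 1 + (1 − p_t) · 2, and p_{t+1} = p_t · φ(O_t − d₁(a_t)) / (p_t · φ(O_t − d₁(a_t)) + (1 − p_t) · φ(O_t − d₂(a_t))). Then for every t ≥ 1, p_t = 1/2 and a_t = 3/2; consequently, for every horizon T ≥ 1, ∑_{t=1}^T ((sup_{a ∈ ℝ} r₁(a)) − r₁(a_t)) = T/4 and ∑_{t=1}^T ((sup_{a ∈ ℝ} r₂(a)) − r₂(a_t)) = T/20. (Paper's Proposition 3, dynamic pricing instance: posterior averaging incurs linear regret T/4 resp. T/20 in this two-environment dynamic pricing instance.) -/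

import Mathlib

/-!
At the averaged price `3/2` the two demand curves cross (`2 - 3/2 = (4 - 3/2)/5 = 1/2`), so
both environments assign the same Gaussian likelihood to every observation and Bayes' rule
returns the prior `1/2` unchanged. By induction the price stays at `3/2` forever, and each
round costs the constant regret `1 - 3/4 = 1/4` under `r₁` and `4/5 - 3/4 = 1/20` under `r₂`.
-/

open Finset

theorem bayes_update_eq_self_of_likelihood_eq {p ℓ : ℝ} (hℓ : ℓ ≠ 0) :
    p * ℓ / (p * ℓ + (1 - p) * ℓ) = p := by
  rw [← add_mul, add_sub_cancel, one_mul, mul_div_cancel_right₀ p hℓ]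

theorem iSup_mul_linear_demand (c k : ℝ) (hk : 0 < k) :
    ⨆ x : ℝ, x * ((c - x) / k) = c ^ 2 / (4 * k) := by
  have hle : ∀ x : ℝ, x * ((c - x) / k) ≤ c ^ 2 / (4 * k) := fun x => by
    rw [mul_div_assoc', div_le_div_iff₀ hk (by positivity)]
    nlinarith [sq_nonneg (2 * x - c)]
  have hmax : c / 2 * ((c - c / 2) / k) = c ^ 2 / (4 * k) := by
    field_simp
    ring
  exact ciSup_eq_of_forall_le_of_forall_lt_exists_gt hle fun w hw => ⟨c / 2, hmax ▸ hw⟩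

theorem sum_Icc_eq_mul_of_forall_eq {f : ℕ → ℝ} {c : ℝ} (T : ℕ)
    (hf : ∀ t ∈ Icc 1 T, f t = c) : ∑ t ∈ Icc 1 T, f t = T * c := by
  rw [sum_congr rfl hf, sum_const, Nat.card_Icc, nsmul_eq_mul, Nat.add_sub_cancel]

/-- Paper's Proposition 3, dynamic pricing instance: posterior averaging keeps the
posterior frozen at `1/2`, posts the price `3/2` forever, and incurs cumulative regret
`T/4` under the demand `d₁(a) = 2 − a` and `T/20` under the demand `d₂(a) = (4 − a)/5`. -/
theorem posterior_averaging_linear_regret_pricing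
    (φ : ℝ → ℝ) (hφ : ∀ x, φ x = (Real.sqrt (2 * Real.pi))⁻¹ * Real.exp (-(x ^ 2) / 2))
    (d₁ d₂ r₁ r₂ : ℝ → ℝ)
    (hd1 : ∀ x, d₁ x = 2 - x) (hd2 : ∀ x, d₂ x = (4 - x) / 5)
    (hr1 : ∀ x, r₁ x = x * d₁ x) (hr2 : ∀ x, r₂ x = x * d₂ x)
    (O : ℕ → ℝ) (p a : ℕ → ℝ)
    (hp1 : p 1 = 1 / 2)
    (ha : ∀ t, 1 ≤ t → a t = p t * 1 + (1 - p t) * 2)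
    (hrec : ∀ t, 1 ≤ t →
      p (t + 1) = p t * φ (O t - d₁ (a t)) /
        (p t * φ (O t - d₁ (a t)) + (1 - p t) * φ (O t - d₂ (a t)))) :
    (∀ t, 1 ≤ t → p t = 1 / 2 ∧ a t = 3 / 2) ∧
    ∀ T : ℕ, 1 ≤ T →
      (∑ t ∈ Finset.Icc 1 T, ((⨆ x : ℝ, r₁ x) - r₁ (a t)) = (T : ℝ) / 4 ∧
       ∑ t ∈ Finset.Icc 1 T, ((⨆ x : ℝ, r₂ x) - r₂ (a t)) = (T : ℝ) / 20) := by
  have hφ_pos : ∀ x, 0 < φ x := fun x => by rw [hφ]; positivity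
  have hprice : ∀ t, 1 ≤ t → p t = 1 / 2 → a t = 3 / 2 := fun t ht hpt => by
    rw [ha t ht, hpt]; norm_num
  have hpost : ∀ t, 1 ≤ t → p t = 1 / 2 := by
    refine Nat.le_induction hp1 fun t ht hpt => ?_
    have hcross : d₁ (a t) = d₂ (a t) := by rw [hd1, hd2, hprice t ht hpt]; norm_num
    rw [hrec t ht, hcross, bayes_update_eq_self_of_likelihood_eq (hφ_pos _).ne', hpt]
  have hsup₁ : ⨆ x, r₁ x = 1 := by
    have hr₁ : r₁ = fun x => x * ((2 - x) / 1) := funext fun x => by rw [hr1, hd1, div_one]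
    rw [hr₁, iSup_mul_linear_demand 2 1 one_pos]
    norm_num
  have hsup₂ : ⨆ x, r₂ x = 4 / 5 := by
    have hr₂ : r₂ = fun x => x * ((4 - x) / 5) := funext fun x => by rw [hr2, hd2]
    rw [hr₂, iSup_mul_linear_demand 4 5 (by norm_num)]
    norm_num
  have hprice_Icc : ∀ T, ∀ t ∈ Icc 1 T, a t = 3 / 2 := fun T t htT =>
    hprice t (mem_Icc.mp htT).1 (hpost t (mem_Icc.mp htT).1)
  refine ⟨fun t ht => ⟨hpost t ht, hprice t ht (hpost t ht)⟩, fun T _ => ⟨?_, ?_⟩⟩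
  · rw [sum_Icc_eq_mul_of_forall_eq (c := 1 / 4) T fun t htT => ?_]
    · ring
    rw [hprice_Icc T t htT, hsup₁, hr1, hd1]
    norm_num
  · rw [sum_Icc_eq_mul_of_forall_eq (c := 1 / 20) T fun t htT => ?_]
    · ring
    rw [hprice_Icc T t htT, hsup₂, hr2, hd2]
    norm_num
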